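/- Let H ∈ (0,1), d ≥ 1, σ > 0, integer n ≥ 1 and nonnegative integer k with H(2k+d) = 1 − 2nH and t ∈ (0,T], α ∈ (0,1). Then lim_{ε↓0} ε^{−n} (log(1+ε^{−1/2}))^{−1} ∫_{t (log(1+ε^{−1/2}))^{−α}}^{T} ∫_{R^d} (min(|ε^{1/2} x|,1))^{2n} |x|^{2k} e^{−(σ/2)|x|^2 s^{2H}} dx ds = 0. -/

import Mathlib

open MeasureTheory Real Set Filter

lemma aux_integrable (d M : ℕ) {c : ℝ} (hc : 0 < c) :
    Integrable (fun x : EuclideanSpace ℝ (Fin d) => ‖x‖ ^ M * Real.exp (-c * ‖x‖ ^ 2)) := by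
  have hg : Integrable (fun x : EuclideanSpace ℝ (Fin d) => Real.exp (-(c/2) * ‖x‖ ^ 2)) := by
    have h := (GaussianFourier.integrable_cexp_neg_mul_sq_norm_add (V := EuclideanSpace ℝ (Fin d))
      (b := ((c/2 : ℝ) : ℂ)) (by simpa using half_pos hc) 0 0).norm
    simpa [Complex.norm_exp, ← Complex.ofReal_pow] using h
  obtain ⟨C, hC0, hCf⟩ : ∃ C : ℝ, 1 ≤ C ∧ (M.factorial : ℝ) * (2/c)^M ≤ C :=
    ⟨(M.factorial : ℝ) * (2/c)^M + 1, by nlinarith [pow_nonneg (by positivity : (0:ℝ) ≤ 2/c) M, (by exact_mod_cast M.factorial_pos : (0:ℝ) < (M.factorial:ℝ))], by linarith⟩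
  refine (hg.const_mul C).mono' ?_ ?_
  · exact (((continuous_norm.pow M)).mul
      (Real.continuous_exp.comp ((continuous_const.mul (continuous_norm.pow 2))))).aestronglyMeasurable
  · filter_upwards with x
    have hr : (0:ℝ) ≤ ‖x‖ := norm_nonneg x
    set r : ℝ := ‖x‖
    have key : r ^ M * Real.exp (-(c/2) * r ^ 2) ≤ C := by
      rcases le_total r 1 with h1 | h1
      · have : r ^ M ≤ 1 := pow_le_one₀ hr h1
        have he : Real.exp (-(c/2) * r ^ 2) ≤ 1 := Real.exp_le_one_iff.2 (by nlinarith)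
        nlinarith [Real.exp_nonneg (-(c/2) * r ^ 2), pow_nonneg hr M]
      · have h2 : r ^ M ≤ (r ^ 2) ^ M := by
          rw [← pow_mul]
          exact pow_le_pow_right₀ h1 (by omega)
        have h4 : ((c/2) * r^2)^M / (M.factorial : ℝ) ≤ Real.exp ((c/2)*r^2) :=
          Real.pow_div_factorial_le_exp ((c/2)*r^2) (by positivity) M
        have h5 : (r^2)^M ≤ (M.factorial : ℝ) * (2/c)^M * Real.exp ((c/2)*r^2) := by
          rw [div_le_iff₀ (by positivity : (0:ℝ) < (M.factorial:ℝ))] at h4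
          have : ((c/2) * r^2)^M = (c/2)^M * (r^2)^M := by rw [mul_pow]
          rw [this] at h4
          have hcm : (0:ℝ) < (c/2)^M := by positivity
          calc (r^2)^M = ((c/2)^M * (r^2)^M) * ((2/c)^M) := by
                field_simp
                rw [← mul_pow, div_mul_div_comm, mul_comm c 2, div_self (by positivity), one_pow]
            _ ≤ (Real.exp ((c/2)*r^2) * (M.factorial:ℝ)) * (2/c)^M := by
                apply mul_le_mul_of_nonneg_right h4 (by positivity)
            _ = (M.factorial : ℝ) * (2/c)^M * Real.exp ((c/2)*r^2) := by ring
        have hee : Real.exp ((c/2)*r^2) * Real.exp (-(c/2)*r^2) = 1 := by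
          rw [← Real.exp_add]; ring_nf; exact Real.exp_zero
        have hepos : (0:ℝ) ≤ Real.exp (-(c/2)*r^2) := Real.exp_nonneg _
        calc r ^ M * Real.exp (-(c/2) * r ^ 2)
            ≤ (M.factorial : ℝ) * (2/c)^M * Real.exp ((c/2)*r^2) * Real.exp (-(c/2)*r^2) := by
              apply mul_le_mul_of_nonneg_right (h2.trans h5) hepos
          _ = (M.factorial : ℝ) * (2/c)^M := by rw [mul_assoc, hee, mul_one]
          _ ≤ C := hCf
    have hsplit : Real.exp (-c * r ^ 2) = Real.exp (-(c/2)*r^2) * Real.exp (-(c/2)*r^2) := by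
      rw [← Real.exp_add]; ring_nf
    rw [Real.norm_eq_abs, abs_of_nonneg (by positivity)]
    calc r ^ M * Real.exp (-c * r ^ 2)
        = (r ^ M * Real.exp (-(c/2)*r^2)) * Real.exp (-(c/2)*r^2) := by rw [hsplit]; ring
      _ ≤ C * Real.exp (-(c/2) * r ^ 2) := mul_le_mul_of_nonneg_right key (Real.exp_nonneg _)

lemma aux_value (d M : ℕ) (c a : ℝ) (ha : 0 < a) :
    ∫ x : EuclideanSpace ℝ (Fin d), ‖x‖ ^ M * Real.exp (-c * ‖x‖ ^ 2 * a ^ 2)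
      = (a ^ (M + d))⁻¹ *
        ∫ x : EuclideanSpace ℝ (Fin d), ‖x‖ ^ M * Real.exp (-c * ‖x‖ ^ 2) := by
  set f : EuclideanSpace ℝ (Fin d) → ℝ := fun y => ‖y‖ ^ M * Real.exp (-c * ‖y‖ ^ 2) with hf
  have h1 := MeasureTheory.Measure.integral_comp_smul_of_nonneg (volume) f a (hR := ha.le)
  have h2 : ∀ x : EuclideanSpace ℝ (Fin d),
      f (a • x) = a ^ M * (‖x‖ ^ M * Real.exp (-c * ‖x‖ ^ 2 * a ^ 2)) := by
    intro x
    simp only [hf, norm_smul, Real.norm_eq_abs, abs_of_nonneg ha.le, mul_pow]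
    ring_nf
  simp only [h2] at h1
  rw [MeasureTheory.integral_const_mul] at h1
  have hfr : Module.finrank ℝ (EuclideanSpace ℝ (Fin d)) = d := finrank_euclideanSpace_fin
  rw [hfr, smul_eq_mul] at h1
  have haM : (0:ℝ) < a ^ M := by positivity
  field_simp [pow_add] at h1 ⊢
  have e : ∀ x : EuclideanSpace ℝ (Fin d), -(c * a ^ 2 * ‖x‖ ^ 2) = -(c * ‖x‖ ^ 2 * a ^ 2) :=
    fun x => by ring
  simp only [e, pow_add]
  rw [← h1]; ring

/-- In the critical regime `H(2k+d) = 1 - 2nH`,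
`ε^{-n} (log(1+ε^{-1/2}))^{-1} ∫_{t (log(1+ε^{-1/2}))^{-α}}^T ∫_{ℝ^d}
 (min(|ε^{1/2}x|,1))^{2n} |x|^{2k} e^{-(σ/2)|x|² s^{2H}} dx ds → 0` as `ε ↓ 0`. -/
theorem statement7 (d n k : ℕ) (hd : 1 ≤ d) (hn : 1 ≤ n) (H σ t T α : ℝ)
    (hH : 0 < H) (hH1 : H < 1) (hσ : 0 < σ)
    (hcrit : H * (2 * k + d) = 1 - 2 * n * H)
    (ht : 0 < t) (htT : t ≤ T) (hα : 0 < α) (hα1 : α < 1) :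
    Tendsto (fun ε : ℝ =>
      ε ^ (-(n : ℝ)) * (Real.log (1 + ε ^ (-(1:ℝ) / 2)))⁻¹ *
        ∫ s in Ioo (t * (Real.log (1 + ε ^ (-(1:ℝ) / 2))) ^ (-α)) T,
          ∫ x : EuclideanSpace ℝ (Fin d),
            (min (Real.sqrt ε * ‖x‖) 1) ^ (2 * n) * ‖x‖ ^ (2 * k) *
              Real.exp (-(σ / 2) * ‖x‖ ^ 2 * s ^ (2 * H)))
      (nhdsWithin 0 (Ioi 0)) (nhds 0) := by
  have hT : 0 < T := lt_of_lt_of_le ht htT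
  set M : ℕ := 2 * n + 2 * k with hM
  set K : ℝ := ∫ x : EuclideanSpace ℝ (Fin d), ‖x‖ ^ M * Real.exp (-(σ/2) * ‖x‖ ^ 2) with hK
  have hK0 : 0 ≤ K :=
    integral_nonneg fun x => mul_nonneg (pow_nonneg (norm_nonneg _) _) (Real.exp_nonneg _)
  -- value of the Gaussian moment integral
  have hval : ∀ s : ℝ, 0 < s →
      (∫ x : EuclideanSpace ℝ (Fin d), ‖x‖ ^ M * Real.exp (-(σ/2) * ‖x‖ ^ 2 * s ^ (2*H)))
        = s⁻¹ * K := by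
    intro s hs
    have h2H : ∀ x : EuclideanSpace ℝ (Fin d),
        ‖x‖ ^ M * Real.exp (-(σ/2) * ‖x‖ ^ 2 * s ^ (2*H))
          = ‖x‖ ^ M * Real.exp (-(σ/2) * ‖x‖ ^ 2 * (s ^ H) ^ 2) := by
      intro x
      congr 2
      rw [← Real.rpow_natCast (s ^ H) 2, ← Real.rpow_mul hs.le]
      norm_num [mul_comm]
    rw [integral_congr_ae (Filter.Eventually.of_forall h2H),
      aux_value d M (σ/2) (s ^ H) (Real.rpow_pos_of_pos hs H)]
    have hsM : (s ^ H) ^ (M + d) = s := by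
      rw [← Real.rpow_natCast (s ^ H) (M + d), ← Real.rpow_mul hs.le]
      have hexp : H * ((M + d : ℕ) : ℝ) = 1 := by
        push_cast [hM]
        ring_nf
        ring_nf at hcrit
        linarith
      rw [hexp, Real.rpow_one]
    rw [hsM, hK]
  -- almost-everywhere (ε near 0⁺) bound
  have hbound : ∀ ε : ℝ, ε ∈ Ioi (0:ℝ) →
      ε ^ (-(n : ℝ)) * (Real.log (1 + ε ^ (-(1:ℝ) / 2)))⁻¹ *
        ∫ s in Ioo (t * (Real.log (1 + ε ^ (-(1:ℝ) / 2))) ^ (-α)) T,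
          ∫ x : EuclideanSpace ℝ (Fin d),
            (min (Real.sqrt ε * ‖x‖) 1) ^ (2 * n) * ‖x‖ ^ (2 * k) *
              Real.exp (-(σ / 2) * ‖x‖ ^ 2 * s ^ (2 * H))
      ≤ (K * T / t) * (Real.log (1 + ε ^ (-(1:ℝ) / 2))) ^ (α - 1) := by
    intro ε hε
    rw [mem_Ioi] at hε
    set L : ℝ := Real.log (1 + ε ^ (-(1:ℝ) / 2)) with hLdef
    have hL0 : 0 < L := by
      apply Real.log_pos
      have : 0 < ε ^ (-(1:ℝ)/2) := Real.rpow_pos_of_pos hε _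
      linarith
    set a : ℝ := t * L ^ (-α) with hadef
    have ha0 : 0 < a := mul_pos ht (Real.rpow_pos_of_pos hL0 _)
    have hmono : ∀ s ∈ Ioo a T,
        (∫ x : EuclideanSpace ℝ (Fin d),
            (min (Real.sqrt ε * ‖x‖) 1) ^ (2 * n) * ‖x‖ ^ (2 * k) *
              Real.exp (-(σ / 2) * ‖x‖ ^ 2 * s ^ (2 * H)))
          ≤ ε ^ n * (a⁻¹ * K) := by
      intro s hs
      have hs0 : 0 < s := lt_trans ha0 hs.1
      have hint : Integrable (fun x : EuclideanSpace ℝ (Fin d) =>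
          ε ^ n * (‖x‖ ^ M * Real.exp (-(σ/2) * ‖x‖ ^ 2 * s ^ (2*H)))) := by
        apply Integrable.const_mul
        have hi := aux_integrable d M (c := (σ/2) * s ^ (2*H))
          (by positivity)
        refine hi.congr (Filter.Eventually.of_forall fun x => ?_)
        dsimp only
        have : -(σ/2 * s ^ (2*H)) * ‖x‖ ^ 2 = -(σ/2) * ‖x‖ ^ 2 * s ^ (2*H) := by ring
        rw [this]
      calc (∫ x : EuclideanSpace ℝ (Fin d),
            (min (Real.sqrt ε * ‖x‖) 1) ^ (2 * n) * ‖x‖ ^ (2 * k) *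
              Real.exp (-(σ / 2) * ‖x‖ ^ 2 * s ^ (2 * H)))
          ≤ ∫ x : EuclideanSpace ℝ (Fin d),
              ε ^ n * (‖x‖ ^ M * Real.exp (-(σ/2) * ‖x‖ ^ 2 * s ^ (2*H))) := by
            apply integral_mono_of_nonneg
            · filter_upwards with x
              have h0 : (0:ℝ) ≤ min (Real.sqrt ε * ‖x‖) 1 :=
                le_min (by positivity) zero_le_one
              positivity
            · exact hint
            · filter_upwards with x
              have h0 : (0:ℝ) ≤ min (Real.sqrt ε * ‖x‖) 1 :=
                le_min (by positivity) zero_le_one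
              have h1 : (min (Real.sqrt ε * ‖x‖) 1) ^ (2*n) ≤ (Real.sqrt ε * ‖x‖) ^ (2*n) :=
                pow_le_pow_left₀ h0 (min_le_left _ _) _
              have h2 : (Real.sqrt ε * ‖x‖) ^ (2*n) = ε ^ n * ‖x‖ ^ (2*n) := by
                rw [mul_pow]
                congr 1
                rw [pow_mul, Real.sq_sqrt hε.le]
              have h3 : ε ^ n * ‖x‖ ^ (2*n) * ‖x‖ ^ (2*k) = ε ^ n * ‖x‖ ^ M := by
                rw [hM, mul_assoc, ← pow_add]
              calc (min (Real.sqrt ε * ‖x‖) 1) ^ (2 * n) * ‖x‖ ^ (2 * k) *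
                    Real.exp (-(σ / 2) * ‖x‖ ^ 2 * s ^ (2 * H))
                  ≤ ε ^ n * ‖x‖ ^ M * Real.exp (-(σ / 2) * ‖x‖ ^ 2 * s ^ (2 * H)) := by
                    apply mul_le_mul_of_nonneg_right _ (Real.exp_nonneg _)
                    rw [← h3]
                    exact mul_le_mul_of_nonneg_right (h1.trans_eq h2) (pow_nonneg (norm_nonneg _) _)
                _ = ε ^ n * (‖x‖ ^ M * Real.exp (-(σ / 2) * ‖x‖ ^ 2 * s ^ (2 * H))) := by ring
        _ = ε ^ n * (s⁻¹ * K) := by rw [MeasureTheory.integral_const_mul, hval s hs0]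
        _ ≤ ε ^ n * (a⁻¹ * K) := by
            apply mul_le_mul_of_nonneg_left _ (pow_nonneg hε.le _)
            exact mul_le_mul_of_nonneg_right
              (inv_anti₀ ha0 hs.1.le) hK0
    have houter : (∫ s in Ioo a T,
        ∫ x : EuclideanSpace ℝ (Fin d),
            (min (Real.sqrt ε * ‖x‖) 1) ^ (2 * n) * ‖x‖ ^ (2 * k) *
              Real.exp (-(σ / 2) * ‖x‖ ^ 2 * s ^ (2 * H)))
        ≤ (ε ^ n * (a⁻¹ * K)) * T := by
      have hvol : (volume (Ioo a T)).toReal ≤ T := by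
        rw [Real.volume_Ioo]
        rcases le_total a T with h | h
        · rw [ENNReal.toReal_ofReal (by linarith)]; linarith
        · rw [ENNReal.ofReal_eq_zero.2 (by linarith)]
          simpa using hT.le
      calc (∫ s in Ioo a T,
          ∫ x : EuclideanSpace ℝ (Fin d),
              (min (Real.sqrt ε * ‖x‖) 1) ^ (2 * n) * ‖x‖ ^ (2 * k) *
                Real.exp (-(σ / 2) * ‖x‖ ^ 2 * s ^ (2 * H)))
          ≤ ∫ _ in Ioo a T, ε ^ n * (a⁻¹ * K) := by
            apply integral_mono_of_nonneg
            · filter_upwards with s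
              apply integral_nonneg
              intro x
              have h0 : (0:ℝ) ≤ min (Real.sqrt ε * ‖x‖) 1 :=
                le_min (by positivity) zero_le_one
              positivity
            · exact integrableOn_const measure_Ioo_lt_top.ne
            · exact (ae_restrict_iff' measurableSet_Ioo).2
                (Filter.Eventually.of_forall hmono)
        _ = (ε ^ n * (a⁻¹ * K)) * (volume (Ioo a T)).toReal := by
            rw [setIntegral_const, smul_eq_mul, mul_comm]; rfl
        _ ≤ (ε ^ n * (a⁻¹ * K)) * T := by
            apply mul_le_mul_of_nonneg_left hvol (by positivity)
    have hfinal : ε ^ (-(n : ℝ)) * L⁻¹ * ((ε ^ n * (a⁻¹ * K)) * T)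
        = (K * T / t) * L ^ (α - 1) := by
      rw [Real.rpow_neg hε.le, Real.rpow_natCast, hadef, Real.rpow_sub hL0,
        Real.rpow_one, Real.rpow_neg hL0.le]
      have hεn : (ε:ℝ) ^ n ≠ 0 := by positivity
      have hLα : (L:ℝ) ^ α ≠ 0 := by positivity
      field_simp
    calc ε ^ (-(n : ℝ)) * L⁻¹ *
          ∫ s in Ioo a T,
            ∫ x : EuclideanSpace ℝ (Fin d),
              (min (Real.sqrt ε * ‖x‖) 1) ^ (2 * n) * ‖x‖ ^ (2 * k) *
                Real.exp (-(σ / 2) * ‖x‖ ^ 2 * s ^ (2 * H))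
        ≤ ε ^ (-(n : ℝ)) * L⁻¹ * ((ε ^ n * (a⁻¹ * K)) * T) := by
          apply mul_le_mul_of_nonneg_left houter
          exact mul_nonneg (Real.rpow_nonneg hε.le _) (inv_nonneg.2 hL0.le)
      _ = (K * T / t) * L ^ (α - 1) := hfinal
  -- the majorant tends to 0
  have hLtop : Tendsto (fun ε : ℝ => Real.log (1 + ε ^ (-(1:ℝ)/2)))
      (nhdsWithin 0 (Ioi 0)) atTop := by
    apply Real.tendsto_log_atTop.comp
    refine tendsto_atTop_add_const_left _ 1 ?_
    have h1 : Tendsto (fun y : ℝ => y ^ ((1:ℝ)/2)) atTop atTop :=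
      tendsto_rpow_atTop (by norm_num)
    have h2 : Tendsto (fun x : ℝ => x⁻¹) (nhdsWithin 0 (Ioi 0)) atTop :=
      tendsto_inv_nhdsGT_zero
    apply (h1.comp h2).congr'
    filter_upwards [self_mem_nhdsWithin] with x hx
    rw [mem_Ioi] at hx
    rw [Function.comp_apply, Real.inv_rpow hx.le, ← Real.rpow_neg hx.le]
    norm_num
  have hmaj : Tendsto (fun ε : ℝ =>
      (K * T / t) * (Real.log (1 + ε ^ (-(1:ℝ)/2))) ^ (α - 1))
      (nhdsWithin 0 (Ioi 0)) (nhds 0) := by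
    have hpow : Tendsto (fun y : ℝ => y ^ (α - 1)) atTop (nhds 0) := by
      have := tendsto_rpow_neg_atTop (by linarith : (0:ℝ) < 1 - α)
      simpa [neg_sub] using this
    have := (hpow.comp hLtop).const_mul (K * T / t)
    simpa using this
  refine squeeze_zero' ?_ (eventually_nhdsWithin_of_forall hbound) hmaj
  filter_upwards [self_mem_nhdsWithin] with ε hε
  rw [mem_Ioi] at hε
  have hL0 : 0 < Real.log (1 + ε ^ (-(1:ℝ)/2)) := by
    apply Real.log_pos
    have : 0 < ε ^ (-(1:ℝ)/2) := Real.rpow_pos_of_pos hε _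
    linarith
  apply mul_nonneg (mul_nonneg (Real.rpow_nonneg hε.le _) (inv_nonneg.2 hL0.le))
  apply integral_nonneg
  intro s
  apply integral_nonneg
  intro x
  have h0 : (0:ℝ) ≤ min (Real.sqrt ε * ‖x‖) 1 := le_min (by positivity) zero_le_one
  positivity
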